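/- Let p > 0, 0 < δ < p, λ > 0, μ > 0, q > 0, and fix z > 0. Let w(x) = A e^{q⁺_Y(q) x} − B e^{q⁻_Y(q) x} be the closed-form refracted scale function of the Cramér–Lundberg model, where A = A⁺_Y W^{(q)}(z) − (μλ/(p(p−δ)(q⁺(q)−q⁻(q))(q⁺_Y(q)−q⁻_Y(q))))(e^{q⁺(q)z} − e^{q⁻(q)z}) and B = A⁻_Y W^{(q)}(z) − (μλ/(p(p−δ)(q⁺(q)−q⁻(q))(q⁺_Y(q)−q⁻_Y(q))))(e^{q⁺(q)z} − e^{q⁻(q)z}). Then there exists a constant a* ≥ 0 such that the derivative w′ is decreasing on (0, a*) and increasing on (a*, ∞). -/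

import Mathlib

/- Cramér–Lundberg model.  The closed-form refracted scale function
   w(x) = A e^{q⁺_Y x} − B e^{q⁻_Y x}: its derivative decreases on (0,a*) and
   increases on (a*,∞) for some a* ≥ 0. -/

noncomputable def qp (p lam μ q : ℝ) : ℝ :=
  (q + lam - μ * p + Real.sqrt ((q + lam - μ * p) ^ 2 + 4 * p * q * μ)) / (2 * p)

noncomputable def qm (p lam μ q : ℝ) : ℝ :=
  (q + lam - μ * p - Real.sqrt ((q + lam - μ * p) ^ 2 + 4 * p * q * μ)) / (2 * p)

noncomputable def Ap (p lam μ q : ℝ) : ℝ := (μ + qp p lam μ q) / (qp p lam μ q - qm p lam μ q)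

noncomputable def Am (p lam μ q : ℝ) : ℝ := (μ + qm p lam μ q) / (qp p lam μ q - qm p lam μ q)

/-- The q-scale function W^{(q)} of X (its formula on [0,∞)). -/
noncomputable def Wq (p lam μ q x : ℝ) : ℝ :=
  1 / p * (Ap p lam μ q * Real.exp (qp p lam μ q * x) -
    Am p lam μ q * Real.exp (qm p lam μ q * x))

/-- The constant A. -/
noncomputable def Aconst (p δ lam μ q z : ℝ) : ℝ :=
  Ap (p - δ) lam μ q * Wq p lam μ q z -
    μ * lam / (p * (p - δ) * (qp p lam μ q - qm p lam μ q) *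
      (qp (p - δ) lam μ q - qm (p - δ) lam μ q)) *
      (Real.exp (qp p lam μ q * z) - Real.exp (qm p lam μ q * z))

/-- The constant B. -/
noncomputable def Bconst (p δ lam μ q z : ℝ) : ℝ :=
  Am (p - δ) lam μ q * Wq p lam μ q z -
    μ * lam / (p * (p - δ) * (qp p lam μ q - qm p lam μ q) *
      (qp (p - δ) lam μ q - qm (p - δ) lam μ q)) *
      (Real.exp (qp p lam μ q * z) - Real.exp (qm p lam μ q * z))

/-- The closed-form refracted scale function x ↦ w^{(q)}(x;−z). -/
noncomputable def wq (p δ lam μ q z x : ℝ) : ℝ :=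
  Aconst p δ lam μ q z * Real.exp (qp (p - δ) lam μ q * x) -
    Bconst p δ lam μ q z * Real.exp (qm (p - δ) lam μ q * x)

lemma abs_lt_sqrt_disc (r lam μ q : ℝ) (hr : 0 < r) (hμ : 0 < μ) (hq : 0 < q) :
    |q + lam - μ * r| < Real.sqrt ((q + lam - μ * r) ^ 2 + 4 * r * q * μ) := by
  rw [← Real.sqrt_sq_eq_abs]
  apply Real.sqrt_lt_sqrt (sq_nonneg _)
  have : 0 < 4 * r * q * μ := by positivity
  linarith

lemma qp_pos (r lam μ q : ℝ) (hr : 0 < r) (hμ : 0 < μ) (hq : 0 < q) :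
    0 < qp r lam μ q := by
  have h := abs_lt_sqrt_disc r lam μ q hr hμ hq
  have h2 := neg_abs_le (q + lam - μ * r)
  unfold qp
  exact div_pos (by linarith) (by linarith)

lemma qm_neg (r lam μ q : ℝ) (hr : 0 < r) (hμ : 0 < μ) (hq : 0 < q) :
    qm r lam μ q < 0 := by
  have h := abs_lt_sqrt_disc r lam μ q hr hμ hq
  have h2 := le_abs_self (q + lam - μ * r)
  unfold qm
  exact div_neg_of_neg_of_pos (by linarith) (by linarith)

lemma qp_quadratic (r lam μ q : ℝ) (hr : 0 < r) (hμ : 0 < μ) (hq : 0 < q) :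
    r * (qp r lam μ q) ^ 2 = (q + lam - μ * r) * qp r lam μ q + q * μ := by
  have hd : (0:ℝ) ≤ (q + lam - μ * r) ^ 2 + 4 * r * q * μ := by positivity
  have hs := Real.sq_sqrt hd
  unfold qp
  field_simp
  rw [show (q + lam - r * μ) ^ 2 + r * q * μ * 4 = (q + lam - μ * r) ^ 2 + 4 * r * q * μ by ring]
  nlinarith [hs]

lemma lam_mul_qp (r lam μ q : ℝ) (hr : 0 < r) (hμ : 0 < μ) (hq : 0 < q) :
    lam * qp r lam μ q = (μ + qp r lam μ q) * (r * qp r lam μ q - q) := by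
  linear_combination -qp_quadratic r lam μ q hr hμ hq

set_option maxHeartbeats 2000000 in
lemma Aconst_pos (p δ lam μ q z : ℝ)
    (hp : 0 < p) (hδ : 0 < δ) (hδp : δ < p) (hlam : 0 < lam) (hμ : 0 < μ) (hq : 0 < q)
    (hz : 0 < z) : 0 < Aconst p δ lam μ q z := by
  have hpd : 0 < p - δ := by linarith
  set ap := qp p lam μ q with hap_def
  set am := qm p lam μ q with ham_def
  set bp := qp (p - δ) lam μ q with hbp_def
  set bm := qm (p - δ) lam μ q with hbm_def
  have hap : 0 < ap := qp_pos p lam μ q hp hμ hq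
  have ham : am < 0 := qm_neg p lam μ q hp hμ hq
  have hbp : 0 < bp := qp_pos (p - δ) lam μ q hpd hμ hq
  have hbm : bm < 0 := qm_neg (p - δ) lam μ q hpd hμ hq
  have hdx : 0 < ap - am := by linarith
  have hdy : 0 < bp - bm := by linarith
  have hlb : lam * bp = (μ + bp) * ((p - δ) * bp - q) := lam_mul_qp (p - δ) lam μ q hpd hμ hq
  -- key inequality
  have h1 : 0 < (μ + bp) * (ap * ((p - δ) * bp) + μ * q) := by
    apply mul_pos (by linarith)
    have : 0 < ap * ((p - δ) * bp) := by positivity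
    nlinarith
  have h2 : μ * (lam * bp) = μ * ((μ + bp) * ((p - δ) * bp - q)) := by rw [hlb]
  have key' : μ * lam * bp < (μ + bp) * (μ + ap) * (p - δ) * bp := by nlinarith [h2, h1]
  have key : μ * lam < (μ + bp) * (μ + ap) * (p - δ) :=
    (mul_lt_mul_iff_of_pos_right hbp).mp key'
  -- coefficient C⁺
  have hCp : 0 < (μ + bp) / (bp - bm) * ((μ + ap) / (ap - am)) * (1 / p) -
      μ * lam / (p * (p - δ) * (ap - am) * (bp - bm)) := by
    have heq : (μ + bp) / (bp - bm) * ((μ + ap) / (ap - am)) * (1 / p) -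
        μ * lam / (p * (p - δ) * (ap - am) * (bp - bm)) =
        ((μ + bp) * (μ + ap) * (p - δ) - μ * lam) /
          (p * (p - δ) * (ap - am) * (bp - bm)) := by
      field_simp
    rw [heq]
    apply div_pos (by linarith) (by positivity)
  -- rewrite Aconst
  have hAeq : Aconst p δ lam μ q z =
      ((μ + bp) / (bp - bm) * ((μ + ap) / (ap - am)) * (1 / p) -
        μ * lam / (p * (p - δ) * (ap - am) * (bp - bm))) *
        (Real.exp (ap * z) - Real.exp (am * z)) +
      (μ + bp) / (bp - bm) * (1 / p) * Real.exp (am * z) := by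
    unfold Aconst Wq Ap Am
    rw [← hap_def, ← ham_def, ← hbp_def, ← hbm_def]
    field_simp
    ring
  rw [hAeq]
  have hexp : Real.exp (am * z) < Real.exp (ap * z) := by
    apply Real.exp_lt_exp.mpr
    nlinarith
  have hApY : 0 < (μ + bp) / (bp - bm) * (1 / p) := by
    apply mul_pos (div_pos (by linarith) hdy) (by positivity)
  have := Real.exp_pos (am * z)
  nlinarith [mul_pos hCp (by linarith : (0:ℝ) < Real.exp (ap * z) - Real.exp (am * z)),
    mul_pos hApY this]

theorem wq_deriv_decreasing_then_increasing_CL (p δ lam μ q z : ℝ)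
    (hp : 0 < p) (hδ : 0 < δ) (hδp : δ < p) (hlam : 0 < lam) (hμ : 0 < μ) (hq : 0 < q)
    (hz : 0 < z) :
    ∃ a : ℝ, 0 ≤ a ∧
      StrictAntiOn (deriv (wq p δ lam μ q z)) (Set.Ioo 0 a) ∧
      StrictMonoOn (deriv (wq p δ lam μ q z)) (Set.Ioi a) := by
  have hpd : 0 < p - δ := by linarith
  set A := Aconst p δ lam μ q z with hA_def
  set B := Bconst p δ lam μ q z with hB_def
  set α := qp (p - δ) lam μ q with hα_def
  set β := qm (p - δ) lam μ q with hβ_def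
  have hA : 0 < A := Aconst_pos p δ lam μ q z hp hδ hδp hlam hμ hq hz
  have hα : 0 < α := qp_pos (p - δ) lam μ q hpd hμ hq
  have hβ : β < 0 := qm_neg (p - δ) lam μ q hpd hμ hq
  have hfeq : wq p δ lam μ q z = fun y => A * Real.exp (α * y) - B * Real.exp (β * y) := rfl
  -- first derivative
  have hd1 : ∀ x : ℝ, HasDerivAt (wq p δ lam μ q z)
      (A * α * Real.exp (α * x) - B * β * Real.exp (β * x)) x := by
    intro x
    rw [hfeq]
    have e1 : HasDerivAt (fun y : ℝ => Real.exp (α * y)) (Real.exp (α * x) * (α * 1)) x :=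
      ((hasDerivAt_id x).const_mul α).exp
    have e2 : HasDerivAt (fun y : ℝ => Real.exp (β * y)) (Real.exp (β * x) * (β * 1)) x :=
      ((hasDerivAt_id x).const_mul β).exp
    have h := (e1.const_mul A).sub (e2.const_mul B)
    exact h.congr_deriv (by ring)
  have hderiv : deriv (wq p δ lam μ q z) =
      fun x => A * α * Real.exp (α * x) - B * β * Real.exp (β * x) :=
    funext fun x => (hd1 x).deriv
  -- second derivative
  have hd2 : ∀ x : ℝ, HasDerivAt (deriv (wq p δ lam μ q z))
      (A * α ^ 2 * Real.exp (α * x) - B * β ^ 2 * Real.exp (β * x)) x := by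
    intro x
    rw [hderiv]
    have e1 : HasDerivAt (fun y : ℝ => Real.exp (α * y)) (Real.exp (α * x) * (α * 1)) x :=
      ((hasDerivAt_id x).const_mul α).exp
    have e2 : HasDerivAt (fun y : ℝ => Real.exp (β * y)) (Real.exp (β * x) * (β * 1)) x :=
      ((hasDerivAt_id x).const_mul β).exp
    have h := (e1.const_mul (A * α)).sub (e2.const_mul (B * β))
    exact h.congr_deriv (by ring)
  have hg : ∀ x : ℝ, deriv (deriv (wq p δ lam μ q z)) x =
      A * α ^ 2 * Real.exp (α * x) - B * β ^ 2 * Real.exp (β * x) :=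
    fun x => (hd2 x).deriv
  have hc : Continuous (deriv (wq p δ lam μ q z)) := by
    rw [hderiv]; fun_prop
  by_cases hB : 0 < B
  · -- B > 0 case
    have hβ2 : (0:ℝ) < β ^ 2 := by nlinarith
    have hB2 : 0 < B * β ^ 2 := mul_pos hB hβ2
    have hA2 : 0 < A * α ^ 2 := by positivity
    have hαβ : 0 < α - β := by linarith
    set L := Real.log (B * β ^ 2 / (A * α ^ 2)) with hL_def
    have hL : L = Real.log (B * β ^ 2) - Real.log (A * α ^ 2) :=
      Real.log_div hB2.ne' hA2.ne'
    set x0 := L / (α - β) with hx0_def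
    refine ⟨max x0 0, le_max_right _ _, ?_, ?_⟩
    · -- strictly decreasing on (0, max x0 0)
      apply strictAntiOn_of_deriv_neg (convex_Ioo 0 _) hc.continuousOn
      intro x hx
      rw [interior_Ioo] at hx
      have hx1 : 0 < x := hx.1
      have hxx0 : x < x0 := by
        rcases lt_max_iff.mp hx.2 with h | h
        · exact h
        · linarith
      rw [hg]
      have hlt : Real.log (A * α ^ 2) + α * x < Real.log (B * β ^ 2) + β * x := by
        have : x * (α - β) < L := (lt_div_iff₀ hαβ).mp hxx0
        linarith [hL ▸ this]
      have : A * α ^ 2 * Real.exp (α * x) < B * β ^ 2 * Real.exp (β * x) := by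
        rw [show A * α ^ 2 * Real.exp (α * x) = Real.exp (Real.log (A * α ^ 2) + α * x) from
            by rw [Real.exp_add, Real.exp_log hA2],
          show B * β ^ 2 * Real.exp (β * x) = Real.exp (Real.log (B * β ^ 2) + β * x) from
            by rw [Real.exp_add, Real.exp_log hB2]]
        exact Real.exp_lt_exp.mpr hlt
      linarith
    · -- strictly increasing on (max x0 0, ∞)
      apply strictMonoOn_of_deriv_pos (convex_Ioi _) hc.continuousOn
      intro x hx
      rw [interior_Ioi] at hx
      have hxx0 : x0 < x := lt_of_le_of_lt (le_max_left _ _) hx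
      rw [hg]
      have hlt : Real.log (B * β ^ 2) + β * x < Real.log (A * α ^ 2) + α * x := by
        have : L < x * (α - β) := (div_lt_iff₀ hαβ).mp hxx0
        linarith [hL ▸ this]
      have : B * β ^ 2 * Real.exp (β * x) < A * α ^ 2 * Real.exp (α * x) := by
        rw [show A * α ^ 2 * Real.exp (α * x) = Real.exp (Real.log (A * α ^ 2) + α * x) from
            by rw [Real.exp_add, Real.exp_log hA2],
          show B * β ^ 2 * Real.exp (β * x) = Real.exp (Real.log (B * β ^ 2) + β * x) from
            by rw [Real.exp_add, Real.exp_log hB2]]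
        exact Real.exp_lt_exp.mpr hlt
      linarith
  · -- B ≤ 0 case
    push_neg at hB
    refine ⟨0, le_refl _, ?_, ?_⟩
    · intro x hx
      exact absurd hx (by simp)
    · apply strictMonoOn_of_deriv_pos (convex_Ioi _) hc.continuousOn
      intro x hx
      rw [hg]
      have h1 : 0 < A * α ^ 2 * Real.exp (α * x) := by positivity
      have h2 : B * β ^ 2 * Real.exp (β * x) ≤ 0 :=
        mul_nonpos_of_nonpos_of_nonneg
          (mul_nonpos_of_nonpos_of_nonneg hB (sq_nonneg β)) (Real.exp_pos _).le
      linarith
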